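/- Let I be an index set and m : I → ℤ. Then there exists a weighted graph (K, w, A) on some linearly ordered vertex type such that π₁(K, w, A) is isomorphic to the free product (Monoid.CoprodI) of the family of cyclic groups (ℤ/m(i)) indexed by i ∈ I. -/

import Mathlib

/-! Realize the free product by the star graph on `I` with a new centre `⊥`, taking the
whole graph as its own spanning tree and weight `m i` on the edge `⊥ — i`. Then every
generator `gᵢ` comes from a tree edge, so `π₁` is presented by `⟨gᵢ | gᵢ ^ m i⟩`, and a
presentation `⟨gᵢ | gᵢ ^ nᵢ⟩` defines the free product of the cyclic groups `ℤ/nᵢ`. -/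

open scoped Classical

variable {V : Type*}

/-- Generators of the weighted fundamental group: edges `ab` of `K` with `a < b`. -/
def WGen [LinearOrder V] (K : SimpleGraph V) : Type _ :=
  {p : V × V // p.1 < p.2 ∧ K.Adj p.1 p.2}

/-- The relators of the weighted fundamental group: (1) `g_{ab}^{w(ab)}` for edges of the
spanning tree `A`; (2) `g_{ab}^{w(ab)} · (g_{av}^{w(av)} · g_{vb}^{w(vb)})⁻¹` for 2-simplices
`{a, v, b} ∈ T` with `a < v < b`. -/
def WRelators [LinearOrder V] (K : SimpleGraph V) (T : Set (Finset V))
    (w : Sym2 V → ℤ) (A : SimpleGraph V) : Set (FreeGroup (WGen K)) :=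
  {r | ∃ e : WGen K, A.Adj e.1.1 e.1.2 ∧ r = FreeGroup.of e ^ w s(e.1.1, e.1.2)} ∪
  {r | ∃ (a v b : V) (hav : a < v) (hvb : v < b)
       (h1 : K.Adj a v) (h2 : K.Adj v b) (h3 : K.Adj a b),
       ({a, v, b} : Finset V) ∈ T ∧
       r = FreeGroup.of (⟨(a, b), hav.trans hvb, h3⟩ : WGen K) ^ w s(a, b) *
         (FreeGroup.of (⟨(a, v), hav, h1⟩ : WGen K) ^ w s(a, v) *
          FreeGroup.of (⟨(v, b), hvb, h2⟩ : WGen K) ^ w s(v, b))⁻¹}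

/-- The weighted fundamental group `π₁(K, w, A)` of the WSC `(K, T, w, A)`,
as a presented group. -/
def wpi1 [LinearOrder V] (K : SimpleGraph V) (T : Set (Finset V))
    (w : Sym2 V → ℤ) (A : SimpleGraph V) : Type _ :=
  PresentedGroup (WRelators K T w A)

noncomputable instance [LinearOrder V] (K : SimpleGraph V) (T : Set (Finset V))
    (w : Sym2 V → ℤ) (A : SimpleGraph V) : Group (wpi1 K T w A) := by
  unfold wpi1; infer_instance

/-- `(K, T, w, A)` is a weighted simplicial complex: `K` is a connected simple graph,
`T` is a set of 2-simplices (unordered triples of distinct pairwise adjacent vertices),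
and `A` is a spanning tree of `K`. -/
structure IsWSC (K : SimpleGraph V) (T : Set (Finset V))
    (w : Sym2 V → ℤ) (A : SimpleGraph V) : Prop where
  conn : K.Connected
  tri : ∀ t ∈ T, ∃ a v b : V, a ≠ v ∧ v ≠ b ∧ a ≠ b ∧ t = {a, v, b} ∧
        K.Adj a v ∧ K.Adj v b ∧ K.Adj a b
  tree : A.IsTree
  le : A ≤ K

/-- Exactly two of the three edges of every 2-simplex of `T` lie in the tree `A`. -/
def ExactlyTwo [LinearOrder V] (T : Set (Finset V)) (A : SimpleGraph V) : Prop :=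
  ∀ a v b : V, a < v → v < b → ({a, v, b} : Finset V) ∈ T →
    ((if A.Adj a b then 1 else 0) + (if A.Adj a v then 1 else 0) +
      (if A.Adj v b then 1 else 0) : ℕ) = 2

open Monoid (CoprodI)
open SimpleGraph

section CyclicFreeProduct

variable {G : Type*} [Group G]

theorem MonoidHom.ext_multiplicative_zmod {n : ℕ} {f g : Multiplicative (ZMod n) →* G}
    (h : f (.ofAdd 1) = g (.ofAdd 1)) : f = g := by
  refine MonoidHom.ext fun x => ?_
  obtain ⟨k, hk⟩ := ZMod.intCast_surjective (Multiplicative.toAdd x)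
  rw [← ofAdd_toAdd x, ← hk, ← mul_one (k : ZMod n), ← zsmul_eq_mul, ofAdd_zsmul, map_zpow,
    map_zpow, h]

noncomputable def zmodLift {n : ℤ} (g : G) (hg : g ^ n = 1) :
    Multiplicative (ZMod n.natAbs) →* G :=
  AddMonoidHom.toMultiplicativeLeft <| ZMod.lift n.natAbs
    ⟨(zpowersHom G g).toAdditiveRight,
      congrArg Additive.ofMul ((zpow_natCast g _).trans (pow_natAbs_eq_one.mpr hg))⟩

@[simp]
theorem zmodLift_ofAdd_one {n : ℤ} (g : G) (hg : g ^ n = 1) : zmodLift g hg (.ofAdd 1) = g := by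
  rw [zmodLift, ← Int.cast_one, AddMonoidHom.toMultiplicativeLeft_apply_apply, toAdd_ofAdd,
    ZMod.lift_coe]
  simp

theorem ofAdd_one_zpow_self (n : ℤ) : (Multiplicative.ofAdd (1 : ZMod n.natAbs)) ^ n = 1 := by
  rw [← ofAdd_zsmul n (1 : ZMod n.natAbs), zsmul_one,
    (ZMod.intCast_zmod_eq_zero_iff_dvd n n.natAbs).mpr Int.natAbs_dvd_self, ofAdd_zero]

theorem PresentedGroup.of_zpow_eq_one {α : Type*} {rels : Set (FreeGroup α)} {x : α} {k : ℤ}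
    (h : FreeGroup.of x ^ k ∈ rels) : (PresentedGroup.of x : PresentedGroup rels) ^ k = 1 := by
  rw [PresentedGroup.of, ← map_zpow]
  exact PresentedGroup.one_of_mem h

variable {ι : Type*}

noncomputable def presentedGroupEquivCoprodIZMod (n : ι → ℤ) :
    PresentedGroup (Set.range fun i => FreeGroup.of i ^ n i) ≃*
      CoprodI fun i => Multiplicative (ZMod (n i).natAbs) :=
  MonoidHom.toMulEquiv
    (PresentedGroup.toGroup
      (f := fun i => CoprodI.of (M := fun i => Multiplicative (ZMod (n i).natAbs)) (.ofAdd 1)) <| by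
      rintro _ ⟨i, rfl⟩
      rw [map_zpow, FreeGroup.lift_apply_of, ← map_zpow, ofAdd_one_zpow_self, map_one])
    (CoprodI.lift fun i => zmodLift _ (PresentedGroup.of_zpow_eq_one ⟨i, rfl⟩))
    (PresentedGroup.ext fun i => by simp)
    (CoprodI.ext_hom _ _ fun i => MonoidHom.ext_multiplicative_zmod (by simp))

end CyclicFreeProduct

theorem isWSC_starGraph (r : V) (w : Sym2 V → ℤ) :
    IsWSC (starGraph r) (∅ : Set (Finset V)) w (starGraph r) :=
  ⟨connected_starGraph r, by simp, isTree_starGraph r, le_rfl⟩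

section StarGraph

variable {ι : Type*} [LinearOrder ι]

def starGraphWGenEquiv : WGen (starGraph (⊥ : WithBot ι)) ≃ ι where
  toFun e := e.1.2.unbot (ne_bot_of_gt e.2.1)
  invFun i := ⟨(⊥, i), WithBot.bot_lt_coe i, starGraph_center_adj WithBot.bot_ne_coe⟩
  left_inv := by
    rintro ⟨⟨a, b⟩, hab, hadj⟩
    obtain rfl : a = ⊥ := (starGraph_adj.mp hadj).2.resolve_right (ne_bot_of_gt hab)
    exact Subtype.ext (Prod.ext rfl (WithBot.coe_unbot _ _))
  right_inv _ := rfl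

@[simp]
theorem starGraphWGenEquiv_symm_val (i : ι) : (starGraphWGenEquiv.symm i).1 = (⊥, ↑i) :=
  rfl

def starWeight (m : ι → ℤ) (e : Sym2 (WithBot ι)) : ℤ :=
  WithBot.recBotCoe 0 m e.sup

@[simp]
theorem starWeight_bot_coe (m : ι → ℤ) (i : ι) : starWeight m s(⊥, (i : WithBot ι)) = m i := by
  simp [starWeight]

theorem image_wRelators_starGraph (m : ι → ℤ) :
    FreeGroup.freeGroupCongr starGraphWGenEquiv ''
        WRelators (starGraph ⊥) ∅ (starWeight m) (starGraph ⊥) =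
      Set.range fun i => FreeGroup.of i ^ m i := by
  ext r
  constructor
  · rintro ⟨_, ⟨e, -, rfl⟩ | ⟨_, _, _, _, _, _, _, _, h, -⟩, rfl⟩
    · obtain ⟨i, rfl⟩ := starGraphWGenEquiv.symm.surjective e
      exact ⟨i, by simp⟩
    · exact absurd h (Set.notMem_empty _)
  · rintro ⟨i, rfl⟩
    exact ⟨_, Or.inl ⟨starGraphWGenEquiv.symm i, (starGraphWGenEquiv.symm i).2.2, rfl⟩,
      by simp⟩

end StarGraph

theorem free_product_cyclic_realizable.{u} (I : Type u) (m : I → ℤ) :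
    ∃ (W : Type u) (_ : LinearOrder W) (K : SimpleGraph W) (w : Sym2 W → ℤ)
      (A : SimpleGraph W), IsWSC K (∅ : Set (Finset W)) w A ∧
      Nonempty (wpi1 K (∅ : Set (Finset W)) w A ≃*
        Monoid.CoprodI (fun i : I => Multiplicative (ZMod (m i).natAbs))) := by
  let _ : LinearOrder I := IsWellOrder.linearOrder WellOrderingRel
  refine ⟨WithBot I, inferInstance, starGraph ⊥, starWeight m, starGraph ⊥,
    isWSC_starGraph ⊥ _, ?_⟩
  have e := PresentedGroup.equivPresentedGroup
    (WRelators (starGraph ⊥) ∅ (starWeight m) (starGraph ⊥)) starGraphWGenEquiv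
  rw [image_wRelators_starGraph] at e
  exact ⟨e.trans (presentedGroupEquivCoprodIZMod m)⟩
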